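/- Token counting rigidity (full statement for a classical simulation): Let N be an NDCS network. Suppose a classical strategy (independent source variables s_i ∈ S_i, deterministic output functions n_j of received values) produces a token-counting distribution in which source S_i distributes η_i tokens, i.e. the support of the outputs satisfies: ∑_j n_j = ∑_i η_i always; min over the support of n_j equals ∑_{i:i→j} ℓ_i^j where ℓ_i^j is the minimal number of tokens S_i can send to A_j; and P(n_j = 0) > 0 for each j. Then there exist functions T_i^j : S_i → ℤ_{≥0} such that (i) ∑_{j: i→j} T_i^j(s_i) = η_i for all i and all s_i, and (ii) n_j({s_i : i→j}) = ∑_{i: i→j} T_i^j(s_i). -/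

import Mathlib

/-!
Choose for each party `j` a configuration `z j` with `n j (z j) = 0` and put
`T i j v := n j (update (z j) i v)`.

Since the total number of tokens is constant and `n j` only sees the sources of `j`, the tokens
received by the children of a source `i` do not depend on `s i`. By NDCS, another parent `i'` of
a child `j` of `i` is a parent of no other child of `i`, so the increment of `n j` under a change
of `s i` cannot depend on `s i'`. Thus `n j` has vanishing mixed differences, i.e. it is a sum of
single-source terms, and expanding around `z j` gives `n j s = ∑ i, T i j (s i)`. Finally, NDCS
also lets all other parents of all children of `i` sit at the zero configurations simultaneously,
which gives `η i ≤ ∑ j, T i j v`; summing over `i` against conservation of tokens forces equality.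
-/

open Function Finset

section Separable

variable {ι : Type*} [Fintype ι] [DecidableEq ι] {S : ι → Type*}

theorem eq_of_forall_apply_update_eq {β : Sort*} {f : (∀ i, S i) → β}
    (h : ∀ s i v, f (update s i v) = f s) (s s' : ∀ i, S i) : f s = f s' := by
  suffices ∀ t : Finset ι, f (fun i => if i ∈ t then s' i else s i) = f s by
    simpa using (this univ).symm
  intro t
  induction t using Finset.induction_on with
  | empty => simp
  | insert a t ha ih =>
    have hins : (fun i => if i ∈ insert a t then s' i else s i)
        = update (fun i => if i ∈ t then s' i else s i) a (s' a) := by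
      ext i
      rcases eq_or_ne i a with rfl | hia <;> simp [*]
    rw [hins, h, ih]

theorem eq_add_sum_of_apply_update_sub_apply_update_eq {G : Type*} [AddCommGroup G]
    {f : (∀ i, S i) → G}
    (h : ∀ i v w s s', f (update s i v) - f (update s i w) = f (update s' i v) - f (update s' i w))
    (z s : ∀ i, S i) : f s = f z + ∑ i, (f (update z i (s i)) - f z) := by
  set g : ∀ i, S i → G := fun i x => f (update z i x) - f z
  suffices f s - ∑ i, g i (s i) = f z - ∑ i, g i (z i) by simpa [g, sub_eq_iff_eq_add] using this
  refine eq_of_forall_apply_update_eq (f := fun s => f s - ∑ i, g i (s i)) (fun s a v => ?_) s z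
  have hsum : ∑ i, g i (update s a v i) = g a v + ∑ i ∈ univ \ {a}, g i (s i) := by
    simp_rw [apply_update g]
    exact sum_update_of_mem (mem_univ a) _ _
  have hinc := h a v (s a) s z
  rw [update_eq_self] at hinc
  simp only [hsum, sum_eq_add_sum_sdiff_singleton_of_mem (mem_univ a) (fun i => g i (s i)), g]
  rw [← sub_eq_zero] at hinc ⊢
  rw [← hinc]
  abel

end Separable

theorem DependsOn.apply_update_of_notMem {ι : Type*} [DecidableEq ι] {α : ι → Type*} {β : Type*}
    {f : (∀ i, α i) → β} {s : Set ι} (hf : DependsOn f s) {i : ι} (hi : i ∉ s) (x : ∀ i, α i)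
    (v : α i) : f (Function.update x i v) = f x :=
  hf fun _ hi' => update_of_ne (ne_of_mem_of_not_mem hi' hi) _ _

def NoDoubleCommonSource {ι κ : Type*} (E : ι → κ → Prop) : Prop :=
  ∀ ⦃i i' j j'⦄, E i j → E i j' → E i' j → E i' j' → i = i' ∨ j = j'

section Network

variable {ι κ : Type*} [Fintype κ] [DecidableEq ι] {S : ι → Type*}
  {E : ι → κ → Prop} [∀ i j, Decidable (E i j)] {n : κ → (∀ i, S i) → ℕ}

theorem sum_adj_apply_update (hdep : ∀ j, DependsOn (n j) {i | E i j}) {N : ℕ}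
    (hsum : ∀ s, ∑ j, n j s = N) (i : ι) (s : ∀ i, S i) (v : S i) :
    ∑ j ∈ {j | E i j}, n j (update s i v) = ∑ j ∈ {j | E i j}, n j s := by
  have hout : ∑ j ∈ {j | ¬E i j}, n j (update s i v) = ∑ j ∈ {j | ¬E i j}, n j s :=
    sum_congr rfl fun j hj => (hdep j).apply_update_of_notMem (mem_filter.1 hj).2 s v
  have h₁ := sum_filter_add_sum_filter_not univ (E i ·) (fun j => n j (update s i v))
  have h₂ := sum_filter_add_sum_filter_not univ (E i ·) (fun j => n j s)
  rw [hsum] at h₁ h₂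
  omega

theorem apply_update_sub_apply_update_eq [Fintype ι] (hdep : ∀ j, DependsOn (n j) {i | E i j})
    (hE : NoDoubleCommonSource E) {N : ℕ} (hsum : ∀ s, ∑ j, n j s = N)
    (j : κ) (i : ι) (v w : S i) (s s' : ∀ i, S i) :
    (n j (update s i v) : ℤ) - n j (update s i w) = n j (update s' i v) - n j (update s' i w) := by
  classical
  by_cases hij : E i j
  swap
  · simp only [(hdep j).apply_update_of_notMem hij, sub_self]
  set δ : κ → (∀ i, S i) → ℤ := fun j' s => n j' (update s i v) - n j' (update s i w)
  have hδ : ∀ s, δ j s = -∑ j' ∈ ({j' | E i j'} : Finset κ).erase j, δ j' s := by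
    intro s
    have hzero : ∑ j' ∈ {j' | E i j'}, δ j' s = 0 := by
      simp only [δ, sum_sub_distrib, ← Nat.cast_sum, sum_adj_apply_update hdep hsum, sub_self]
    rw [← add_sum_erase _ _ (mem_filter.2 ⟨mem_univ j, hij⟩)] at hzero
    linarith
  refine eq_of_forall_apply_update_eq (f := δ j) (fun s i' u => ?_) s s'
  rcases eq_or_ne i' i with rfl | hne
  · simp [δ]
  have hδ_update : ∀ j', ¬E i' j' → δ j' (update s i' u) = δ j' s := fun j' h => by
    simp only [δ, update_comm hne, (hdep j').apply_update_of_notMem h]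
  by_cases hi'j : E i' j
  · rw [hδ, hδ]
    congr 1
    refine sum_congr rfl fun j' hj' => hδ_update j' fun hi'j' => ?_
    obtain ⟨hj'j, hj'⟩ := mem_erase.1 hj'
    rcases hE hij (mem_filter.1 hj').2 hi'j hi'j' with h | h
    exacts [hne h.symm, hj'j h.symm]
  · exact hδ_update j hi'j

theorem eq_sum_apply_update_of_eq_zero [Fintype ι] (hdep : ∀ j, DependsOn (n j) {i | E i j})
    (hE : NoDoubleCommonSource E) {N : ℕ} (hsum : ∀ s, ∑ j, n j s = N)
    {j : κ} {z : ∀ i, S i} (hz : n j z = 0) (s : ∀ i, S i) :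
    n j s = ∑ i ∈ {i | E i j}, n j (update z i (s i)) := by
  have h := eq_add_sum_of_apply_update_sub_apply_update_eq (f := fun s => (n j s : ℤ))
    (apply_update_sub_apply_update_eq hdep hE hsum j) z s
  simp only [hz, Nat.cast_zero, sub_zero, zero_add] at h
  rw [sum_filter_of_ne fun i _ hi => ?_]
  · exact_mod_cast h
  · by_contra hij
    exact hi (((hdep j).apply_update_of_notMem hij z (s i)).trans hz)

theorem exists_forall_adj_apply_eq_apply_update [∀ i, Nonempty (S i)]
    (hdep : ∀ j, DependsOn (n j) {i | E i j}) (hE : NoDoubleCommonSource E)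
    (z : κ → ∀ i, S i) (i : ι) (v : S i) :
    ∃ t : ∀ i, S i, ∀ j, E i j → n j t = n j (update (z j) i v) := by
  classical
  -- by NDCS a coparent `i'` of `i` shares exactly one child `j` with it; give it the value `z j i'`
  let t : ∀ i, S i := fun i' =>
    if h : ∃ j, E i j ∧ E i' j then z h.choose i' else Classical.arbitrary _
  refine ⟨update t i v, fun j hij => hdep j fun i' hi'j => ?_⟩
  rcases eq_or_ne i' i with rfl | hne
  · simp
  have hex : ∃ j, E i j ∧ E i' j := ⟨j, hij, hi'j⟩
  have hchoose : hex.choose = j := by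
    obtain ⟨h₁, h₂⟩ := hex.choose_spec
    exact (hE h₁ hij h₂ hi'j).resolve_left hne.symm
  simp only [update_of_ne hne, t, dif_pos hex, hchoose]

theorem sum_adj_apply_update_eq [Fintype ι] [∀ i, Nonempty (S i)]
    (hdep : ∀ j, DependsOn (n j) {i | E i j}) (hE : NoDoubleCommonSource E) {η : ι → ℕ}
    (hsum : ∀ s, ∑ j, n j s = ∑ i, η i) (hη : ∀ i s, η i ≤ ∑ j ∈ {j | E i j}, n j s)
    {z : κ → ∀ i, S i} (hz : ∀ j, n j (z j) = 0) (i : ι) (v : S i) :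
    ∑ j ∈ {j | E i j}, n j (update (z j) i v) = η i := by
  let P : ∀ i, S i → ℕ := fun i x => ∑ j ∈ {j | E i j}, n j (update (z j) i x)
  have hle : ∀ i x, η i ≤ P i x := fun i x => by
    obtain ⟨t, ht⟩ := exists_forall_adj_apply_eq_apply_update hdep hE z i x
    exact (hη i t).trans_eq (sum_congr rfl fun j hj => ht j (mem_filter.1 hj).2)
  let s : ∀ i, S i := update (fun _ => Classical.arbitrary _) i v
  have htot : ∑ i, η i = ∑ i, P i (s i) := by
    simp only [P, sum_filter]
    rw [sum_comm, ← hsum s]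
    refine sum_congr rfl fun j _ => ?_
    rw [eq_sum_apply_update_of_eq_zero hdep hE hsum (hz j) s, sum_filter]
  have := (sum_eq_sum_iff_of_le fun i _ => hle i (s i)).1 htot i (mem_univ i)
  simpa [s, P] using this.symm

end Network

theorem TC_rigidity_full_general
    {I J : ℕ} (S : Fin I → Type*) [∀ i, Nonempty (S i)]
    (E : Fin I → Fin J → Prop) [∀ i j, Decidable (E i j)]
    (hNDCS : ¬ ∃ (i i' : Fin I) (j j' : Fin J),
      i ≠ i' ∧ j ≠ j' ∧ E i j ∧ E i j' ∧ E i' j ∧ E i' j')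
    (η : Fin I → ℕ)
    (n : Fin J → (∀ i, S i) → ℕ)
    -- each party's output depends only on the sources connected to it
    (hdep : ∀ j, ∀ s s' : ∀ i, S i, (∀ i, E i j → s i = s' i) → n j s = n j s')
    -- the total number of tokens is always ∑ η_i
    (hsum : ∀ s : ∀ i, S i, ∑ j, n j s = ∑ i, η i)
    -- ∑_{j:i→j} n_j ≥ η_i: the parties connected to S_i receive its η_i tokens
    (hη : ∀ i, ∀ s : ∀ i, S i,
      η i ≤ ∑ j ∈ Finset.univ.filter (fun j => E i j), n j s)
    -- P(n_j = 0) > 0 for each j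
    (hzero : ∀ j, ∃ s : ∀ i, S i, n j s = 0) :
    ∃ T : (i : Fin I) → Fin J → S i → ℕ,
      (∀ i (si : S i), ∑ j ∈ Finset.univ.filter (fun j => E i j), T i j si = η i) ∧
      (∀ j (s : ∀ i, S i),
        n j s = ∑ i ∈ Finset.univ.filter (fun i => E i j), T i j (s i)) := by
  have hdep' : ∀ j, DependsOn (n j) {i | E i j} := fun j s s' h => hdep j s s' h
  have hE : NoDoubleCommonSource E := fun i i' j j' h₁ h₂ h₃ h₄ => by
    by_contra! h
    exact hNDCS ⟨i, i', j, j', h.1, h.2, h₁, h₂, h₃, h₄⟩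
  choose z hz using hzero
  exact ⟨fun i j v => n j (update (z j) i v), sum_adj_apply_update_eq hdep' hE hsum hη hz,
    fun j => eq_sum_apply_update_of_eq_zero hdep' hE hsum (hz j)⟩

theorem TC_rigidity_full
    {I J : ℕ} (S : Fin I → Type*) [∀ i, Nonempty (S i)]
    (E : Fin I → Fin J → Prop) [∀ i j, Decidable (E i j)]
    (hNDCS : ¬ ∃ (i i' : Fin I) (j j' : Fin J),
      i ≠ i' ∧ j ≠ j' ∧ E i j ∧ E i j' ∧ E i' j ∧ E i' j')
    (η : Fin I → ℕ) (ℓ : Fin I → Fin J → ℕ)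
    (n : Fin J → (∀ i, S i) → ℕ)
    -- each party's output depends only on the sources connected to it
    (hdep : ∀ j, ∀ s s' : ∀ i, S i, (∀ i, E i j → s i = s' i) → n j s = n j s')
    -- the total number of tokens is always ∑ η_i
    (hsum : ∀ s : ∀ i, S i, ∑ j, n j s = ∑ i, η i)
    -- ∑_{j:i→j} n_j ≥ η_i: the parties connected to S_i receive its η_i tokens
    (hη : ∀ i, ∀ s : ∀ i, S i,
      η i ≤ ∑ j ∈ Finset.univ.filter (fun j => E i j), n j s)
    -- the minimum of n_j over the support equals ∑_{i:i→j} ℓ_i^j,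
    -- ℓ_i^j being the minimal number of tokens S_i can send to A_j
    (hminlb : ∀ j, ∀ s : ∀ i, S i,
      ∑ i ∈ Finset.univ.filter (fun i => E i j), ℓ i j ≤ n j s)
    (hminach : ∀ j, ∃ s : ∀ i, S i,
      n j s = ∑ i ∈ Finset.univ.filter (fun i => E i j), ℓ i j)
    -- P(n_j = 0) > 0 for each j
    (hzero : ∀ j, ∃ s : ∀ i, S i, n j s = 0) :
    ∃ T : (i : Fin I) → Fin J → S i → ℕ,
      (∀ i (si : S i), ∑ j ∈ Finset.univ.filter (fun j => E i j), T i j si = η i) ∧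
      (∀ j (s : ∀ i, S i),
        n j s = ∑ i ∈ Finset.univ.filter (fun i => E i j), T i j (s i)) :=
  TC_rigidity_full_general S E hNDCS η n hdep hsum hη hzero
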